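/- Let ω ⊂ ℝ² be a bounded open set, let f, g : ω → ℝ be bounded measurable functions with f ≤ g, and set Ω := {(x', x₃) ∈ ℝ³ : x' ∈ ω, f(x') < x₃ < g(x')} with thickness d := g − f. Let h^ex = (h₁^ex, h₂^ex, h₃^ex) ∈ ℝ³ and define A^ex(x) := (1/2) h^ex × x, with third component A₃^ex(x') = (1/2)(h₁^ex x₂ − h₂^ex x₁), horizontal part (A^ex)'(x) = (1/2)(h₂^ex x₃ − h₃^ex x₂, h₃^ex x₁ − h₁^ex x₃), and (B^ex)'(x') := (h₃^ex/2)(−x₂, x₁) + ((f(x')+g(x'))/2)(h₂^ex, −h₁^ex). Let v : ω → ℂ have weak gradient ∇'v, with v ∈ L²(ω;ℂ) and ∇'v ∈ L²(ω;ℂ²), and set u(x) := v(x') e^{i A₃^ex(x') x₃} on Ω. Then ∫_Ω |(∇' − i (A^ex)') u|² dx = ∫_ω d(x') ( |(∇' − i (B^ex)') v|² + (d(x')²/12) ((h₁^ex)² + (h₂^ex)²) |v|² ) dx'. -/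

import Mathlib

open MeasureTheory Filter Topology ENNReal

noncomputable section

/-- Points of `ℝ³`. -/
abbrev V3 : Type := Fin 3 → ℝ

/-- Points of `ℝ²`. -/
abbrev V2 : Type := Fin 2 → ℝ

/-- The horizontal projection `x ↦ x' = (x₁, x₂)`. -/
def proj3 (x : V3) : V2 := ![x 0, x 1]

/-- The point `(x', t) ∈ ℝ³` over `x' ∈ ℝ²`. -/
def ext3 (x' : V2) (t : ℝ) : V3 := ![x' 0, x' 1, t]

/-- The film `Ω = {(x', x₃) : x' ∈ ω, f(x') < x₃ < g(x')}`. -/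
def slab (ω : Set V2) (f g : V2 → ℝ) : Set V3 :=
  {x : V3 | proj3 x ∈ ω ∧ x 2 ∈ Set.Ioo (f (proj3 x)) (g (proj3 x))}

/-- The third component `A₃^ex(x') = (1/2)(h₁^ex x₂ − h₂^ex x₁)` of `A^ex = (1/2) h^ex × x`. -/
def Aex3 (hex : Fin 3 → ℝ) (x' : V2) : ℝ := (hex 0 * x' 1 - hex 1 * x' 0) / 2

/-- The horizontal part `(A^ex)'(x) = (1/2)(h₂^ex x₃ − h₃^ex x₂, h₃^ex x₁ − h₁^ex x₃)`. -/
def AexH (hex : Fin 3 → ℝ) (x : V3) : Fin 2 → ℝ :=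
  ![(hex 1 * x 2 - hex 2 * x 1) / 2, (hex 2 * x 0 - hex 0 * x 2) / 2]

/-- The effective potential `(B^ex)'(x') = (h₃^ex/2)(−x₂, x₁) + ((f+g)/2)(h₂^ex, −h₁^ex)`. -/
def BexH (hex : Fin 3 → ℝ) (f g : V2 → ℝ) (x' : V2) : Fin 2 → ℝ :=
  ![hex 2 / 2 * (-(x' 1)) + (f x' + g x') / 2 * hex 1,
    hex 2 / 2 * x' 0 + (f x' + g x') / 2 * (-(hex 0))]

/-- The (constant) horizontal gradient `∇'A₃^ex = (1/2)(−h₂^ex, h₁^ex)`. -/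
def gradAex3 (hex : Fin 3 → ℝ) : Fin 2 → ℝ := ![-(hex 1) / 2, hex 0 / 2]

/-- The gauge phase `e^{i A₃^ex(x') x₃}`. -/
def phase (hex : Fin 3 → ℝ) (x : V3) : ℂ :=
  Complex.exp (Complex.I * ((Aex3 hex (proj3 x) * x 2 : ℝ) : ℂ))

/-- A test function on `ℝ²` compactly supported inside `ω`. -/
def IsTestOn2 (ω : Set V2) (χ : V2 → ℝ) : Prop :=
  ContDiff ℝ (⊤ : ℕ∞) χ ∧ HasCompactSupport χ ∧ tsupport χ ⊆ ω

/-- The classical partial derivative `∂ᵢ χ` on `ℝ²`. -/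
def pd2 (χ : V2 → ℝ) (i : Fin 2) (x : V2) : ℝ := fderiv ℝ χ x (Pi.single i 1)

/-- `Dv` is the weak (horizontal) gradient `∇'v` of `v` on `ω`. -/
def HasWeakGradOn2 (ω : Set V2) (v : V2 → ℂ) (Dv : V2 → Fin 2 → ℂ) : Prop :=
  ∀ (i : Fin 2) (χ : V2 → ℝ), IsTestOn2 ω χ →
    ∫ x in ω, v x * ((pd2 χ i x : ℝ) : ℂ) = - ∫ x in ω, Dv x i * ((χ x : ℝ) : ℂ)

/-- The order parameter `u(x) = v(x') e^{i A₃^ex(x') x₃}` on the film. -/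
def uOf (hex : Fin 3 → ℝ) (v : V2 → ℂ) (x : V3) : ℂ := v (proj3 x) * phase hex x

/-- The horizontal gradient `∇'u = e^{iA₃^ex x₃}(∇'v + i x₃ v ∇'A₃^ex)` of
`u = v e^{iA₃^ex x₃}`, from the chain rule. -/
def DuOf (hex : Fin 3 → ℝ) (v : V2 → ℂ) (Dv : V2 → Fin 2 → ℂ) (x : V3) (j : Fin 2) : ℂ :=
  phase hex x * (Dv (proj3 x) j +
    Complex.I * ((x 2 : ℝ) : ℂ) * v (proj3 x) * ((gradAex3 hex j : ℝ) : ℂ))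



/-- The coefficient vector `(h₂, −h₁)`. -/
def cvec (hex : Fin 3 → ℝ) : Fin 2 → ℝ := ![hex 1, -(hex 0)]

/-- The fibre integrand, as a function of `x'` and the vertical variable `t`. -/
def F9 (hex : Fin 3 → ℝ) (f g : V2 → ℝ) (v : V2 → ℂ) (Dv : V2 → Fin 2 → ℂ)
    (x' : V2) (t : ℝ) : ℝ :=
  ∑ j : Fin 2, ‖Dv x' j - Complex.I * ((BexH hex f g x' j : ℝ) : ℂ) * v x'
      - Complex.I * ((cvec hex j * (t - (f x' + g x') / 2) : ℝ) : ℂ) * v x'‖ ^ 2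

def e3 : V3 ≃ᵐ ℝ × V2 := MeasurableEquiv.piFinSuccAbove (fun _ => ℝ) 2

lemma e3_mp : MeasurePreserving e3 volume ((volume : Measure ℝ).prod (volume : Measure V2)) :=
  volume_preserving_piFinSuccAbove (fun _ : Fin 3 => ℝ) 2

lemma e3_snd (x : V3) : (e3 x).2 = proj3 x := by
  funext j; fin_cases j <;> rfl

lemma e3_fst (x : V3) : (e3 x).1 = x 2 := rfl

lemma measurable_proj3 : Measurable proj3 := by
  apply measurable_pi_lambda
  intro j; fin_cases j
  · exact measurable_pi_apply 0
  · exact measurable_pi_apply 1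

lemma proj3_null {S : Set V2} (hS : MeasurableSet S) (h : volume S = 0) :
    volume {x : V3 | proj3 x ∈ S} = 0 := by
  have h1 : {x : V3 | proj3 x ∈ S} = e3 ⁻¹' {p : ℝ × V2 | p.2 ∈ S} := by
    ext x; simp [e3_snd]
  rw [h1, e3_mp.measure_preimage (by exact (measurable_snd hS) |>.nullMeasurableSet)]
  have h2 : {p : ℝ × V2 | p.2 ∈ S} = Set.univ ×ˢ S := by ext p; simp
  rw [h2, Measure.prod_prod, h, mul_zero]

lemma fubini_slab (ω : Set V2) (hω : MeasurableSet ω) {f g : V2 → ℝ}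
    (hf : Measurable f) (hg : Measurable g) (F : V2 → ℝ → ℝ≥0∞)
    (hF : Measurable (fun p : ℝ × V2 => F p.2 p.1)) :
    ∫⁻ x in slab ω f g, F (proj3 x) (x 2)
      = ∫⁻ x' in ω, ∫⁻ t in Set.Ioo (f x') (g x'), F x' t := by
  have hSmeas : MeasurableSet {p : ℝ × V2 | p.2 ∈ ω ∧ p.1 ∈ Set.Ioo (f p.2) (g p.2)} := by
    apply MeasurableSet.inter
    · exact measurable_snd hω
    · exact MeasurableSet.inter
        (measurableSet_lt (hf.comp measurable_snd) measurable_fst)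
        (measurableSet_lt measurable_fst (hg.comp measurable_snd))
  have hslab : MeasurableSet (slab ω f g) := by
    have : slab ω f g = e3 ⁻¹' {p : ℝ × V2 | p.2 ∈ ω ∧ p.1 ∈ Set.Ioo (f p.2) (g p.2)} := by
      ext x; simp [slab, Set.mem_preimage, e3_snd, e3_fst]
    rw [this]; exact e3.measurable hSmeas
  set K : ℝ × V2 → ℝ≥0∞ :=
    ({p : ℝ × V2 | p.2 ∈ ω ∧ p.1 ∈ Set.Ioo (f p.2) (g p.2)}).indicator
      (fun p => F p.2 p.1) with hK
  have hKm : Measurable K := hF.indicator hSmeas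
  have step1 : ∫⁻ x in slab ω f g, F (proj3 x) (x 2) = ∫⁻ x, K (e3 x) := by
    rw [← lintegral_indicator hslab]
    congr 1; funext x
    by_cases hx : x ∈ slab ω f g
    · rw [Set.indicator_of_mem hx, hK, Set.indicator_of_mem]
      · simp [e3_snd, e3_fst]
      · simpa [e3_snd, e3_fst, slab] using hx
    · rw [Set.indicator_of_notMem hx, hK, Set.indicator_of_notMem]
      simpa [e3_snd, e3_fst, slab] using hx
  rw [step1, e3_mp.lintegral_comp hKm, MeasureTheory.lintegral_prod_symm _ hKm.aemeasurable]
  rw [← lintegral_indicator hω]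
  congr 1; funext y
  by_cases hy : y ∈ ω
  · rw [Set.indicator_of_mem hy, ← lintegral_indicator (measurableSet_Ioo)]
    congr 1; funext t
    by_cases ht : t ∈ Set.Ioo (f y) (g y)
    · rw [Set.indicator_of_mem ht, hK, Set.indicator_of_mem]; exact ⟨hy, ht⟩
    · rw [Set.indicator_of_notMem ht, hK, Set.indicator_of_notMem]
      simp only [Set.mem_setOf_eq]; tauto
  · rw [Set.indicator_of_notMem hy]
    have : ∀ t, K (t, y) = 0 := by
      intro t; rw [hK, Set.indicator_of_notMem]; simp only [Set.mem_setOf_eq]; tauto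
    simp [this]

lemma norm_sq_expand (a v : ℂ) (c s : ℝ) :
    ‖a - Complex.I * ((c * s : ℝ) : ℂ) * v‖ ^ 2
      = ‖a‖ ^ 2 - 2 * c * s * ((a * (starRingEnd ℂ) (Complex.I * v)).re)
        + c ^ 2 * s ^ 2 * ‖v‖ ^ 2 := by
  simp only [Complex.sq_norm, Complex.normSq_apply, Complex.mul_re,
    Complex.mul_im, Complex.sub_re, Complex.sub_im, Complex.I_re, Complex.I_im,
    Complex.ofReal_re, Complex.ofReal_im, Complex.conj_re, Complex.conj_im]
  ring

lemma poly_integral (a b P Q R : ℝ) (hab : a ≤ b) :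
    ∫ t in Set.Ioo a b, (P + Q * (t - (a+b)/2) + R * (t - (a+b)/2)^2)
      = (b-a)*P + (b-a)^3/12*R := by
  set m := (a+b)/2 with hm
  have hcont : Continuous fun t : ℝ => P + Q * (t - m) + R * (t - m)^2 := by continuity
  have h1 : ∀ t ∈ Set.uIcc a b, HasDerivAt (fun t : ℝ => P*t + Q*(t-m)^2/2 + R*(t-m)^3/3)
      (P + Q * (t - m) + R * (t - m)^2) t := by
    intro t _
    have h := (hasDerivAt_id t).sub_const m
    have h2 := ((h.pow 2).const_mul Q).div_const 2
    have h3 := ((h.pow 3).const_mul R).div_const 3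
    have h0 := (hasDerivAt_id t).const_mul P
    refine ((h0.add h2).add h3).congr_deriv ?_
    simp only [id_eq]
    push_cast
    ring
  have := intervalIntegral.integral_eq_sub_of_hasDerivAt h1 (hcont.intervalIntegrable a b)
  rw [← MeasureTheory.integral_Ioc_eq_integral_Ioo, ← intervalIntegral.integral_of_le hab, this]
  ring

lemma vec_identity (hex : Fin 3 → ℝ) (f g : V2 → ℝ) (x : V3) (j : Fin 2) :
    AexH hex x j - x 2 * gradAex3 hex j
      = BexH hex f g (proj3 x) j + cvec hex j * (x 2 - (f (proj3 x) + g (proj3 x)) / 2) := by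
  have hx0 : proj3 x 0 = x 0 := rfl
  have hx1 : proj3 x 1 = x 1 := rfl
  fin_cases j
  · show AexH hex x 0 - x 2 * gradAex3 hex 0
      = BexH hex f g (proj3 x) 0 + cvec hex 0 * (x 2 - (f (proj3 x) + g (proj3 x)) / 2)
    simp only [AexH, BexH, gradAex3, cvec, Matrix.cons_val_zero, hx1]
    ring
  · show AexH hex x 1 - x 2 * gradAex3 hex 1
      = BexH hex f g (proj3 x) 1 + cvec hex 1 * (x 2 - (f (proj3 x) + g (proj3 x)) / 2)
    simp only [AexH, BexH, gradAex3, cvec, Matrix.cons_val_one, Matrix.head_cons, Matrix.cons_val_zero, hx0]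
    ring

lemma lemA (hex : Fin 3 → ℝ) (f g : V2 → ℝ) (v : V2 → ℂ) (Dv : V2 → Fin 2 → ℂ) (x : V3) :
    ∑ j : Fin 2, ‖DuOf hex v Dv x j - Complex.I * ((AexH hex x j : ℝ) : ℂ) * uOf hex v x‖ ^ 2
      = F9 hex f g v Dv (proj3 x) (x 2) := by
  unfold F9
  apply Finset.sum_congr rfl
  intro j _
  have hphase : ‖phase hex x‖ = 1 := by
    simp [phase, Complex.norm_exp]
  have h1 : DuOf hex v Dv x j - Complex.I * ((AexH hex x j : ℝ) : ℂ) * uOf hex v x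
      = phase hex x * (Dv (proj3 x) j
          - Complex.I * ((BexH hex f g (proj3 x) j : ℝ) : ℂ) * v (proj3 x)
          - Complex.I * ((cvec hex j * (x 2 - (f (proj3 x) + g (proj3 x)) / 2) : ℝ) : ℂ)
            * v (proj3 x)) := by
    have h2 : ((AexH hex x j : ℝ) : ℂ)
        = ((BexH hex f g (proj3 x) j : ℝ) : ℂ)
          + ((cvec hex j * (x 2 - (f (proj3 x) + g (proj3 x)) / 2) : ℝ) : ℂ)
          + ((x 2 : ℝ) : ℂ) * ((gradAex3 hex j : ℝ) : ℂ) := by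
      have h2' : AexH hex x j = BexH hex f g (proj3 x) j
          + cvec hex j * (x 2 - (f (proj3 x) + g (proj3 x)) / 2) + x 2 * gradAex3 hex j := by
        linarith [vec_identity hex f g x j]
      rw [h2']
      push_cast
      ring
    unfold DuOf uOf
    rw [h2]
    ring
  rw [h1, norm_mul, hphase, one_mul]

lemma F9_nonneg (hex : Fin 3 → ℝ) (f g : V2 → ℝ) (v : V2 → ℂ) (Dv : V2 → Fin 2 → ℂ)
    (x' : V2) (t : ℝ) : 0 ≤ F9 hex f g v Dv x' t :=
  Finset.sum_nonneg fun j _ => by positivity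

lemma F9_cont (hex : Fin 3 → ℝ) (f g : V2 → ℝ) (v : V2 → ℂ) (Dv : V2 → Fin 2 → ℂ)
    (x' : V2) : Continuous fun t => F9 hex f g v Dv x' t := by
  unfold F9
  apply continuous_finset_sum
  intro j _
  fun_prop

lemma lemB (hex : Fin 3 → ℝ) (f g : V2 → ℝ) (v : V2 → ℂ) (Dv : V2 → Fin 2 → ℂ)
    (x' : V2) (hle : f x' ≤ g x') :
    ∫ t in Set.Ioo (f x') (g x'), F9 hex f g v Dv x' t
      = (g x' - f x') *
          ((∑ j : Fin 2, ‖Dv x' j - Complex.I * ((BexH hex f g x' j : ℝ) : ℂ) * v x'‖ ^ 2)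
            + (g x' - f x') ^ 2 / 12 * ((hex 0) ^ 2 + (hex 1) ^ 2) * ‖v x'‖ ^ 2) := by
  set P : ℝ := ∑ j : Fin 2, ‖Dv x' j - Complex.I * ((BexH hex f g x' j : ℝ) : ℂ) * v x'‖ ^ 2
    with hP
  set Q : ℝ := ∑ j : Fin 2, (-2) * cvec hex j *
      (((Dv x' j - Complex.I * ((BexH hex f g x' j : ℝ) : ℂ) * v x')
        * (starRingEnd ℂ) (Complex.I * v x')).re) with hQ
  set R : ℝ := ((hex 0) ^ 2 + (hex 1) ^ 2) * ‖v x'‖ ^ 2 with hR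
  have key : ∀ t, F9 hex f g v Dv x' t
      = P + Q * (t - (f x' + g x')/2) + R * (t - (f x' + g x')/2)^2 := by
    intro t
    unfold F9
    rw [hP, hQ, hR]
    simp only [Fin.sum_univ_two, norm_sq_expand]
    have hc0 : cvec hex 0 = hex 1 := rfl
    have hc1 : cvec hex 1 = -(hex 0) := rfl
    rw [hc0, hc1]
    ring
  simp_rw [key]
  rw [poly_integral _ _ _ _ _ hle, hR]
  ring

lemma BexH_meas (hex : Fin 3 → ℝ) {f g : V2 → ℝ} (hf : Measurable f) (hg : Measurable g)
    (j : Fin 2) : Measurable fun x' : V2 => BexH hex f g x' j := by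
  fin_cases j
  · show Measurable fun x' : V2 => BexH hex f g x' 0
    simp only [BexH, Matrix.cons_val_zero]
    fun_prop
  · show Measurable fun x' : V2 => BexH hex f g x' 1
    simp only [BexH, Matrix.cons_val_one, Matrix.head_cons]
    fun_prop

lemma F9_meas (hex : Fin 3 → ℝ) {f g : V2 → ℝ} {v : V2 → ℂ} {Dv : V2 → Fin 2 → ℂ}
    (hf : Measurable f) (hg : Measurable g) (hv : Measurable v) (hDv : Measurable Dv) :
    Measurable fun p : ℝ × V2 => F9 hex f g v Dv p.2 p.1 := by
  unfold F9
  apply Finset.measurable_sum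
  intro j _
  have hDvj : Measurable fun x' : V2 => Dv x' j := (measurable_pi_apply j).comp hDv
  have hB := BexH_meas hex hf hg j
  fun_prop

lemma rhs_meas (hex : Fin 3 → ℝ) {f g : V2 → ℝ} {v : V2 → ℂ} {Dv : V2 → Fin 2 → ℂ}
    (hf : Measurable f) (hg : Measurable g) (hv : Measurable v) (hDv : Measurable Dv) :
    Measurable fun x' : V2 => (g x' - f x') *
          ((∑ j : Fin 2, ‖Dv x' j - Complex.I * ((BexH hex f g x' j : ℝ) : ℂ) * v x'‖ ^ 2)
            + (g x' - f x') ^ 2 / 12 * ((hex 0) ^ 2 + (hex 1) ^ 2) * ‖v x'‖ ^ 2) := by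
  have hsum : Measurable fun x' : V2 =>
      ∑ j : Fin 2, ‖Dv x' j - Complex.I * ((BexH hex f g x' j : ℝ) : ℂ) * v x'‖ ^ 2 := by
    apply Finset.measurable_sum
    intro j _
    have hDvj : Measurable fun x' : V2 => Dv x' j := (measurable_pi_apply j).comp hDv
    have hB := BexH_meas hex hf hg j
    fun_prop
  fun_prop

lemma slab_meas {ω : Set V2} (hω : MeasurableSet ω) {f g : V2 → ℝ}
    (hf : Measurable f) (hg : Measurable g) : MeasurableSet (slab ω f g) := by
  have hSmeas : MeasurableSet {p : ℝ × V2 | p.2 ∈ ω ∧ p.1 ∈ Set.Ioo (f p.2) (g p.2)} := by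
    apply MeasurableSet.inter
    · exact measurable_snd hω
    · exact MeasurableSet.inter
        (measurableSet_lt (hf.comp measurable_snd) measurable_fst)
        (measurableSet_lt measurable_fst (hg.comp measurable_snd))
  have : slab ω f g = e3 ⁻¹' {p : ℝ × V2 | p.2 ∈ ω ∧ p.1 ∈ Set.Ioo (f p.2) (g p.2)} := by
    ext x; simp [slab, Set.mem_preimage, e3_snd, e3_fst]
  rw [this]; exact e3.measurable hSmeas

lemma main_sm (ω : Set V2) (hωm : MeasurableSet ω)
    (f g : V2 → ℝ) (hf : Measurable f) (hg : Measurable g)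
    (hfg : ∀ x' : V2, f x' ≤ g x')
    (hex : Fin 3 → ℝ)
    (v : V2 → ℂ) (Dv : V2 → Fin 2 → ℂ)
    (hv : Measurable v) (hDv : Measurable Dv) :
    (∫ x in slab ω f g, ∑ j : Fin 2,
        ‖DuOf hex v Dv x j - Complex.I * ((AexH hex x j : ℝ) : ℂ) * uOf hex v x‖ ^ 2)
      = ∫ x' in ω, (g x' - f x') *
          ((∑ j : Fin 2, ‖Dv x' j - Complex.I * ((BexH hex f g x' j : ℝ) : ℂ) * v x'‖ ^ 2)
            + (g x' - f x') ^ 2 / 12 * ((hex 0) ^ 2 + (hex 1) ^ 2) * ‖v x'‖ ^ 2) := by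
  set G : V3 → ℝ := fun x => ∑ j : Fin 2,
      ‖DuOf hex v Dv x j - Complex.I * ((AexH hex x j : ℝ) : ℂ) * uOf hex v x‖ ^ 2 with hG
  set Ψ : V2 → ℝ := fun x' => (g x' - f x') *
      ((∑ j : Fin 2, ‖Dv x' j - Complex.I * ((BexH hex f g x' j : ℝ) : ℂ) * v x'‖ ^ 2)
        + (g x' - f x') ^ 2 / 12 * ((hex 0) ^ 2 + (hex 1) ^ 2) * ‖v x'‖ ^ 2) with hΨ
  have hF9m := F9_meas hex hf hg hv hDv
  have hGeq : G = fun x => F9 hex f g v Dv (proj3 x) (x 2) := funext (lemA hex f g v Dv)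
  have hGm : Measurable G := by
    rw [hGeq]
    have : (fun x : V3 => F9 hex f g v Dv (proj3 x) (x 2))
        = (fun p : ℝ × V2 => F9 hex f g v Dv p.2 p.1) ∘ e3 := by
      funext x; simp [Function.comp, e3_snd, e3_fst]
    rw [this]
    exact hF9m.comp e3.measurable
  have hGnn : ∀ x, 0 ≤ G x := fun x => Finset.sum_nonneg fun j _ => by positivity
  have hΨm : Measurable Ψ := rhs_meas hex hf hg hv hDv
  have hΨnn : ∀ x', 0 ≤ Ψ x' := by
    intro x'
    apply mul_nonneg (sub_nonneg.2 (hfg x'))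
    have : (0:ℝ) ≤ ∑ j : Fin 2,
        ‖Dv x' j - Complex.I * ((BexH hex f g x' j : ℝ) : ℂ) * v x'‖ ^ 2 :=
      Finset.sum_nonneg fun j _ => by positivity
    positivity
  calc ∫ x in slab ω f g, G x
      = (∫⁻ x in slab ω f g, ENNReal.ofReal (G x)).toReal :=
        integral_eq_lintegral_of_nonneg_ae (ae_of_all _ hGnn) hGm.aestronglyMeasurable
    _ = (∫⁻ x in slab ω f g,
          (fun x' t => ENNReal.ofReal (F9 hex f g v Dv x' t)) (proj3 x) (x 2)).toReal := by
        congr 1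
        apply lintegral_congr
        intro x
        rw [hGeq]
    _ = (∫⁻ x' in ω, ∫⁻ t in Set.Ioo (f x') (g x'),
          ENNReal.ofReal (F9 hex f g v Dv x' t)).toReal := by
        congr 1
        exact fubini_slab ω hωm hf hg (fun x' t => ENNReal.ofReal (F9 hex f g v Dv x' t))
          hF9m.ennreal_ofReal
    _ = (∫⁻ x' in ω, ENNReal.ofReal (Ψ x')).toReal := by
        congr 1
        apply lintegral_congr
        intro x'
        have hint : IntegrableOn (fun t => F9 hex f g v Dv x' t)
            (Set.Ioo (f x') (g x')) volume :=
          ((F9_cont hex f g v Dv x').integrableOn_Icc).mono_set Set.Ioo_subset_Icc_self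
        rw [← ofReal_integral_eq_lintegral_ofReal hint
          (ae_of_all _ fun t => F9_nonneg hex f g v Dv x' t),
          lemB hex f g v Dv x' (hfg x')]
    _ = ∫ x' in ω, Ψ x' :=
        (integral_eq_lintegral_of_nonneg_ae (ae_of_all _ hΨnn) hΨm.aestronglyMeasurable).symm

/-- With `Ω` the film over a bounded open `ω ⊂ ℝ²` between the graphs of
bounded measurable `f ≤ g`, `u = v e^{iA₃^ex x₃}` built from `v` with weak gradient
`∇'v ∈ L²(ω;ℂ²)`, `v ∈ L²(ω;ℂ)`, one has
`∫_Ω |(∇' − i(A^ex)')u|² dx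
  = ∫_ω d(x') (|(∇' − i(B^ex)')v|² + (d²/12)((h₁^ex)² + (h₂^ex)²)|v|²) dx'`. -/
theorem statement9 (ω : Set V2) (hωopen : IsOpen ω) (hωbdd : Bornology.IsBounded ω)
    (f g : V2 → ℝ) (hf : Measurable f) (hg : Measurable g)
    (hbdd : ∃ M : ℝ, ∀ x' : V2, |f x'| ≤ M ∧ |g x'| ≤ M)
    (hfg : ∀ x' : V2, f x' ≤ g x')
    (hex : Fin 3 → ℝ)
    (v : V2 → ℂ) (Dv : V2 → Fin 2 → ℂ)
    (hv : MemLp v 2 (volume.restrict ω))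
    (hDv : MemLp Dv 2 (volume.restrict ω))
    (hgrad : HasWeakGradOn2 ω v Dv) :
    (∫ x in slab ω f g, ∑ j : Fin 2,
        ‖DuOf hex v Dv x j - Complex.I * ((AexH hex x j : ℝ) : ℂ) * uOf hex v x‖ ^ 2)
      = ∫ x' in ω, (g x' - f x') *
          ((∑ j : Fin 2, ‖Dv x' j - Complex.I * ((BexH hex f g x' j : ℝ) : ℂ) * v x'‖ ^ 2)
            + (g x' - f x') ^ 2 / 12 * ((hex 0) ^ 2 + (hex 1) ^ 2) * ‖v x'‖ ^ 2) := by
  have hωm : MeasurableSet ω := hωopen.measurableSet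
  set v' : V2 → ℂ := hv.1.mk v with hv'def
  set Dv' : V2 → Fin 2 → ℂ := hDv.1.mk Dv with hDv'def
  have hv'sm : StronglyMeasurable v' := hv.1.stronglyMeasurable_mk
  have hDv'sm : StronglyMeasurable Dv' := hDv.1.stronglyMeasurable_mk
  have hvae : v =ᵐ[volume.restrict ω] v' := hv.1.ae_eq_mk
  have hDvae : Dv =ᵐ[volume.restrict ω] Dv' := hDv.1.ae_eq_mk
  -- the bad set
  have hbad1 : volume ({x' : V2 | v x' ≠ v' x'} ∩ ω) = 0 := by
    rw [← Measure.restrict_apply' hωm]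
    exact hvae
  have hbad2 : volume ({x' : V2 | Dv x' ≠ Dv' x'} ∩ ω) = 0 := by
    rw [← Measure.restrict_apply' hωm]
    exact hDvae
  set Sbad : Set V2 := ({x' : V2 | v x' ≠ v' x'} ∪ {x' : V2 | Dv x' ≠ Dv' x'}) ∩ ω with hSbad
  have hbad : volume Sbad = 0 := by
    rw [hSbad, Set.union_inter_distrib_right]
    exact measure_union_null hbad1 hbad2
  set S : Set V2 := toMeasurable volume Sbad with hSdef
  have hSm : MeasurableSet S := measurableSet_toMeasurable _ _
  have hS0 : volume S = 0 := by rw [hSdef, measure_toMeasurable]; exact hbad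
  have hnull3 : volume {x : V3 | proj3 x ∈ S} = 0 := proj3_null hSm hS0
  have haeS : ∀ᵐ x : V3, proj3 x ∉ S := by
    rw [ae_iff]
    simpa using hnull3
  have hslabm : MeasurableSet (slab ω f g) := slab_meas hωm hf hg
  -- replace v, Dv by measurable representatives on both sides
  have hLHS : (∫ x in slab ω f g, ∑ j : Fin 2,
        ‖DuOf hex v Dv x j - Complex.I * ((AexH hex x j : ℝ) : ℂ) * uOf hex v x‖ ^ 2)
      = ∫ x in slab ω f g, ∑ j : Fin 2,
        ‖DuOf hex v' Dv' x j - Complex.I * ((AexH hex x j : ℝ) : ℂ) * uOf hex v' x‖ ^ 2 := by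
    apply integral_congr_ae
    rw [EventuallyEq, ae_restrict_iff' hslabm]
    filter_upwards [haeS] with x hx hxslab
    have hv2 : v (proj3 x) = v' (proj3 x) := by
      by_contra hc
      exact hx (subset_toMeasurable _ _ ⟨Or.inl hc, hxslab.1⟩)
    have hD2 : Dv (proj3 x) = Dv' (proj3 x) := by
      by_contra hc
      exact hx (subset_toMeasurable _ _ ⟨Or.inr hc, hxslab.1⟩)
    simp only [DuOf, uOf, hv2, hD2]
  have hRHS : (∫ x' in ω, (g x' - f x') *
          ((∑ j : Fin 2, ‖Dv x' j - Complex.I * ((BexH hex f g x' j : ℝ) : ℂ) * v x'‖ ^ 2)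
            + (g x' - f x') ^ 2 / 12 * ((hex 0) ^ 2 + (hex 1) ^ 2) * ‖v x'‖ ^ 2))
      = ∫ x' in ω, (g x' - f x') *
          ((∑ j : Fin 2, ‖Dv' x' j - Complex.I * ((BexH hex f g x' j : ℝ) : ℂ) * v' x'‖ ^ 2)
            + (g x' - f x') ^ 2 / 12 * ((hex 0) ^ 2 + (hex 1) ^ 2) * ‖v' x'‖ ^ 2) := by
    apply integral_congr_ae
    filter_upwards [hvae, hDvae] with x' h1 h2
    rw [h1, h2]
  rw [hLHS, hRHS]
  exact main_sm ω hωm f g hf hg hfg hex v' Dv' hv'sm.measurable hDv'sm.measurable
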